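/- Under the stated multi-facet setup, for every j one has Z_j* ≤ 1; consequently the minimum value −Σ_{j=1}^J log Z_j* of the objective F over probability mass functions on Π_j C_j is nonnegative, and it equals zero if and only if for every j and every c_j ∈ C_j the function z_j ↦ p_j z_j c_j is μ_j-almost everywhere constant. -/

import Mathlib

/-!
Jensen's inequality for the strictly convex `exp` gives, for each facet and label,
`exp (∫ log p) ≤ ∫ p`, with equality exactly when `p` is a.e. constant. Summing over the labels,
`Z_j* ≤ ∑ c, ∫ p j z c ∂μ_j = 1`, with equality iff every `p j · c` is a.e. constant; hence every
`log Z_j*` is nonpositive, and their sum vanishes iff all of them do.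
-/

open MeasureTheory Real Finset

section Jensen

variable {α : Type*} [MeasurableSpace α] {μ : Measure α} [IsProbabilityMeasure μ] {f : α → ℝ}

lemma exp_integral_log_le_integral (hf : ∀ᵐ x ∂μ, 0 < f x)
    (hlog : Integrable (fun x => log (f x)) μ) (hfi : Integrable f μ) :
    exp (∫ x, log (f x) ∂μ) ≤ ∫ x, f x ∂μ := by
  have hexp_log : (fun x => exp (log (f x))) =ᵐ[μ] f := hf.mono fun x hx => exp_log hx
  calc exp (∫ x, log (f x) ∂μ) ≤ ∫ x, exp (log (f x)) ∂μ :=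
        convexOn_exp.map_integral_le continuous_exp.continuousOn isClosed_univ
          (ae_of_all _ fun _ => Set.mem_univ _) hlog (hfi.congr hexp_log.symm)
    _ = ∫ x, f x ∂μ := integral_congr_ae hexp_log

lemma exp_integral_log_eq_integral_iff (hf : ∀ᵐ x ∂μ, 0 < f x)
    (hlog : Integrable (fun x => log (f x)) μ) (hfi : Integrable f μ) :
    exp (∫ x, log (f x) ∂μ) = ∫ x, f x ∂μ ↔ ∃ a, ∀ᵐ x ∂μ, f x = a := by
  have hexp_log : (fun x => exp (log (f x))) =ᵐ[μ] f := hf.mono fun x hx => exp_log hx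
  constructor
  · intro h
    rcases strictConvexOn_exp.ae_eq_const_or_map_average_lt continuous_exp.continuousOn
      isClosed_univ (ae_of_all _ fun _ => Set.mem_univ _) hlog (hfi.congr hexp_log.symm)
      with hconst | hlt
    · refine ⟨exp (⨍ x, log (f x) ∂μ), ?_⟩
      filter_upwards [hconst, hf] with x hx hfx
      rw [← exp_log hfx, show log (f x) = _ from hx, Function.const_apply]
    · simp only [average_eq_integral, integral_congr_ae hexp_log, h] at hlt
      exact absurd hlt (lt_irrefl _)
  · rintro ⟨a, ha⟩
    obtain ⟨x, hfx, hxa⟩ := (hf.and ha).exists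
    have ha_pos : 0 < a := hxa ▸ hfx
    rw [integral_congr_ae (ha.mono fun x hx => congrArg log hx), integral_congr_ae ha]
    simp [exp_log ha_pos]

end Jensen

section Facet

variable {Z C : Type*} [MeasurableSpace Z] {μ : Measure Z} [Fintype C] {p : Z → C → ℝ}

lemma integrable_of_sum_eq_one [IsFiniteMeasure μ] (hnn : ∀ z c, 0 ≤ p z c)
    (hsum : ∀ z, ∑ c, p z c = 1) {c : C} (hm : AEStronglyMeasurable (fun z => p z c) μ) :
    Integrable (fun z => p z c) μ := by
  refine (integrable_const (1 : ℝ)).mono' hm (ae_of_all _ fun z => ?_)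
  rw [norm_of_nonneg (hnn z c), ← hsum z]
  exact single_le_sum (fun c' _ => hnn z c') (mem_univ c)

variable [IsProbabilityMeasure μ] (hpos : ∀ z c, 0 < p z c) (hsum : ∀ z, ∑ c, p z c = 1)
  (hlog : ∀ c, Integrable (fun z => log (p z c)) μ)
include hpos hsum hlog

lemma integrable_of_integrable_log_of_sum_eq_one (c : C) : Integrable (fun z => p z c) μ := by
  refine integrable_of_sum_eq_one (fun z c => (hpos z c).le) hsum ?_
  exact (continuous_exp.comp_aestronglyMeasurable (hlog c).aestronglyMeasurable).congr
    (ae_of_all _ fun z => exp_log (hpos z c))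

lemma sum_integral_eq_one : ∑ c, ∫ z, p z c ∂μ = 1 := by
  rw [← integral_finsetSum _ fun c _ => integrable_of_integrable_log_of_sum_eq_one hpos hsum hlog c]
  simp [hsum]

lemma sum_exp_integral_log_le_one : ∑ c, exp (∫ z, log (p z c) ∂μ) ≤ 1 :=
  sum_integral_eq_one hpos hsum hlog ▸ sum_le_sum fun c _ =>
    exp_integral_log_le_integral (ae_of_all _ (hpos · c)) (hlog c)
      (integrable_of_integrable_log_of_sum_eq_one hpos hsum hlog c)

lemma sum_exp_integral_log_eq_one_iff :
    ∑ c, exp (∫ z, log (p z c) ∂μ) = 1 ↔ ∀ c, ∃ a, ∀ᵐ z ∂μ, p z c = a := by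
  have hle c := exp_integral_log_le_integral (ae_of_all μ (hpos · c)) (hlog c)
    (integrable_of_integrable_log_of_sum_eq_one hpos hsum hlog c)
  rw [← sum_integral_eq_one hpos hsum hlog, sum_eq_sum_iff_of_le fun c _ => hle c]
  simp only [mem_univ, true_implies]
  exact forall_congr' fun c => exp_integral_log_eq_integral_iff (ae_of_all μ (hpos · c)) (hlog c)
    (integrable_of_integrable_log_of_sum_eq_one hpos hsum hlog c)

end Facet

lemma sum_log_eq_zero_iff_of_mem_Ioc {ι : Type*} {s : Finset ι} {x : ι → ℝ}
    (hx : ∀ i ∈ s, x i ∈ Set.Ioc 0 1) : ∑ i ∈ s, log (x i) = 0 ↔ ∀ i ∈ s, x i = 1 := by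
  rw [sum_eq_zero_iff_of_nonpos fun i hi => log_nonpos (hx i hi).1.le (hx i hi).2]
  exact forall₂_congr fun i hi =>
    ⟨eq_one_of_pos_of_log_eq_zero (hx i hi).1, fun h => by rw [h, log_one]⟩

theorem multi_facet_normalizers_le_one_general
    {J : ℕ}
    {Z : Fin J → Type*} [∀ j, MeasurableSpace (Z j)]
    (μ : ∀ j, Measure (Z j)) [∀ j, IsProbabilityMeasure (μ j)]
    {C : Fin J → Type*} [∀ j, Fintype (C j)] [∀ j, Nonempty (C j)]
    (p : ∀ j, Z j → C j → ℝ)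
    (hpos : ∀ j (z : Z j) (c : C j), 0 < p j z c)
    (hsum : ∀ j (z : Z j), ∑ c, p j z c = 1)
    (hint : ∀ j (c : C j), Integrable (fun z => Real.log (p j z c)) (μ j))
    (Zstar : Fin J → ℝ)
    (hZstar : ∀ j, Zstar j = ∑ c, Real.exp (∫ z, Real.log (p j z c) ∂(μ j))) :
    (∀ j, Zstar j ≤ 1)
    ∧ (0 ≤ -(∑ j, Real.log (Zstar j)))
    ∧ ((-(∑ j, Real.log (Zstar j)) = 0)
        ↔ ∀ j (c : C j), ∃ a : ℝ, ∀ᵐ z ∂(μ j), p j z c = a) := by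
  have hle j : Zstar j ≤ 1 := hZstar j ▸ sum_exp_integral_log_le_one (hpos j) (hsum j) (hint j)
  have hZpos j : 0 < Zstar j := hZstar j ▸ sum_pos (fun _ _ => exp_pos _) univ_nonempty
  refine ⟨hle, neg_nonneg.2 (sum_nonpos fun j _ => log_nonpos (hZpos j).le (hle j)), ?_⟩
  rw [neg_eq_zero, sum_log_eq_zero_iff_of_mem_Ioc fun j _ => ⟨hZpos j, hle j⟩]
  simp only [mem_univ, true_implies, hZstar]
  exact forall_congr' fun j => sum_exp_integral_log_eq_one_iff (hpos j) (hsum j) (hint j)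

/-- For every facet `j`, `Z_j* ≤ 1`; hence the minimum `−Σ_j log Z_j*` of the objective
is nonnegative, and it is zero iff every `p j (·) c` is `μ j`-a.e. constant. -/
theorem multi_facet_normalizers_le_one
    {J : ℕ} (hJ : 1 ≤ J)
    {Z : Fin J → Type*} [∀ j, MeasurableSpace (Z j)]
    (μ : ∀ j, Measure (Z j)) [∀ j, IsProbabilityMeasure (μ j)]
    {C : Fin J → Type*} [∀ j, Fintype (C j)] [∀ j, Nonempty (C j)]
    (p : ∀ j, Z j → C j → ℝ)
    (hpos : ∀ j (z : Z j) (c : C j), 0 < p j z c)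
    (hsum : ∀ j (z : Z j), ∑ c, p j z c = 1)
    (hmeas : ∀ j (c : C j), Measurable fun z => Real.log (p j z c))
    (hint : ∀ j (c : C j), Integrable (fun z => Real.log (p j z c)) (μ j))
    (Zstar : Fin J → ℝ)
    (hZstar : ∀ j, Zstar j = ∑ c, Real.exp (∫ z, Real.log (p j z c) ∂(μ j))) :
    (∀ j, Zstar j ≤ 1)
    ∧ (0 ≤ -(∑ j, Real.log (Zstar j)))
    ∧ ((-(∑ j, Real.log (Zstar j)) = 0)
        ↔ ∀ j (c : C j), ∃ a : ℝ, ∀ᵐ z ∂(μ j), p j z c = a) :=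
  multi_facet_normalizers_le_one_general μ p hpos hsum hint Zstar hZstar
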